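/- Let G(x,y) = (ζ+2)xy(x+y) − ζ(x²+y²) − 2(ζ²+3ζ+1)xy + ζ(2ζ+1)(x+y), and set ξ_0 = 2ζ+1, ξ_1 = ζ/(ζ+2), ξ_2 = ζ(2ζ+1)/(ζ+2), ξ_3 = 1. Then: G(x,ξ_0) = 2(ζ+1)²x², G(x,ξ_1) = 2ζ²(ζ+1)²/(ζ+2)², G(x,ξ_2) = 2ζ²((ζ+2)x−(2ζ+1))²/(ζ+2)², and G(x,ξ_3) = 2(x−ζ)². -/
import Mathlib


/-- The polynomial `G(x,y)` with parameter `ζ`. -/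
noncomputable def Gfun (z x y : ℂ) : ℂ :=
  (z + 2) * x * y * (x + y) - z * (x ^ 2 + y ^ 2) - 2 * (z ^ 2 + 3 * z + 1) * x * y +
    z * (2 * z + 1) * (x + y)

/-- Values of `G` at the special points `ξ_0 = 2ζ+1`, `ξ_1 = ζ/(ζ+2)`,
`ξ_2 = ζ(2ζ+1)/(ζ+2)`, `ξ_3 = 1`. -/
theorem Gfun_special_values (z : ℂ) (hz : z ≠ -2) :
    (∀ x : ℂ, Gfun z x (2 * z + 1) = 2 * (z + 1) ^ 2 * x ^ 2) ∧
    (∀ x : ℂ, Gfun z x (z / (z + 2)) = 2 * z ^ 2 * (z + 1) ^ 2 / (z + 2) ^ 2) ∧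
    (∀ x : ℂ, Gfun z x (z * (2 * z + 1) / (z + 2)) =
      2 * z ^ 2 * ((z + 2) * x - (2 * z + 1)) ^ 2 / (z + 2) ^ 2) ∧
    (∀ x : ℂ, Gfun z x 1 = 2 * (x - z) ^ 2) := by
  have h2 : z + 2 ≠ 0 := fun h => hz (by linear_combination h)
  refine ⟨fun x => ?_, fun x => ?_, fun x => ?_, fun x => ?_⟩ <;> unfold Gfun
  · ring
  · have hd : z / (z + 2) * (z + 2) = z := div_mul_cancel₀ z h2
    rw [show 2 * z ^ 2 * (z + 1) ^ 2 / (z + 2) ^ 2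
        = 2 * (z + 1) ^ 2 * (z / (z + 2)) ^ 2 by rw [div_pow]; ring]
    linear_combination (3 * (z / (z + 2)) - 2 * (z + 2) * (z / (z + 2)) + 3 * x
      + x * (z / (z + 2)) - 2 * x * (z + 2) + x ^ 2) * hd
  · have hd : z / (z + 2) * (z + 2) = z := div_mul_cancel₀ z h2
    rw [show 2 * z ^ 2 * ((z + 2) * x - (2 * z + 1)) ^ 2 / (z + 2) ^ 2
        = 2 * ((z + 2) * x - (2 * z + 1)) ^ 2 * (z / (z + 2)) ^ 2 by rw [div_pow]; ring]
    linear_combination (-9 * (z / (z + 2)) + 12 * (z + 2) * (z / (z + 2))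
      - 4 * (z + 2) ^ 2 * (z / (z + 2)) + 3 * x - 3 * x * (z / (z + 2)) - 2 * x * (z + 2)
      - 4 * x * (z + 2) * (z / (z + 2)) + 4 * x * (z + 2) ^ 2 * (z / (z + 2)) + x ^ 2
      - 2 * x ^ 2 * (z + 2) * (z / (z + 2))) * hd
  · ring
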